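/- arXiv:2509.08527 — 3 statements merged into one kernel-verified Lean document; each statement's English description precedes it below -/
import Mathlib

section
/- Let P be a partition of r with level function γ_P, and let 2 ≤ μ ≤ r. If γ_P(μ-1) = γ_P(μ) - 1 and γ_P(μ-2) = γ_P(μ-1) - 1, then γ_P(μ+ε) = γ_P(μ) + ε for all ε ≥ 1 with μ + ε ≤ r. -/
/-- Number of boxes in the first `c` columns of the Young diagram of the partition `P`
(given as the multiset of its parts): `∑_{b=1}^{c} n_b` where `n_b = #{parts ≥ b}`. -/
def colSum (P : Multiset ℕ) (c : ℕ) : ℕ := (P.map fun x => min x c).sum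

/-- The level function `γ_P` of a partition `P`: `γ_P μ` is the least `c` such that the
first `c` columns of the Young diagram of `P` contain at least `μ` boxes. -/
noncomputable def level (P : Multiset ℕ) (μ : ℕ) : ℕ := sInf {c | μ ≤ colSum P c}

/-- `m` is (the list of parts, in weakly decreasing order, of) a partition of `r`. -/
def IsPartitionOf (m : List ℕ) (r : ℕ) : Prop :=
  m.Pairwise (· ≥ ·) ∧ (∀ x ∈ m, 0 < x) ∧ m.sum = r

lemma colSum_zero (P : Multiset ℕ) : colSum P 0 = 0 := by simp [colSum]

lemma colSum_succ (P : Multiset ℕ) (c : ℕ) :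
    colSum P (c+1) = colSum P c + (P.filter (fun x => c < x)).card := by
  classical
  induction P using Multiset.induction with
  | empty => simp [colSum]
  | cons a s ih =>
    simp only [colSum, Multiset.map_cons, Multiset.sum_cons, Multiset.filter_cons] at *
    by_cases h : c < a <;> simp [h, ih] <;> omega

lemma colSum_mono (P : Multiset ℕ) : Monotone (colSum P) := by
  apply monotone_nat_of_le_succ
  intro c
  rw [colSum_succ]; exact Nat.le_add_right _ _

lemma colSum_le_sum (P : Multiset ℕ) (c : ℕ) : colSum P c ≤ P.sum := by
  calc (P.map fun x => min x c).sum ≤ (P.map id).sum :=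
        Multiset.sum_map_le_sum_map _ _ (fun i _ => min_le_left _ _)
    _ = P.sum := by simp

lemma colSum_sum (P : Multiset ℕ) : colSum P P.sum = P.sum := by
  have : ∀ x ∈ P, min x P.sum = x := fun x hx =>
    min_eq_left (Multiset.single_le_sum (fun _ _ => Nat.zero_le _) x hx)
  calc (P.map fun x => min x P.sum).sum = (P.map id).sum := by
        apply congrArg; exact Multiset.map_congr rfl this
    _ = P.sum := by simp

lemma step_antitone (P : Multiset ℕ) {c d : ℕ} (h : c ≤ d) :
    (P.filter (fun x => d < x)).card ≤ (P.filter (fun x => c < x)).card := by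
  classical
  apply Multiset.card_le_card
  apply Multiset.monotone_filter_right
  intro x hx; exact lt_of_le_of_lt h hx

lemma step_pos (P : Multiset ℕ) (c : ℕ) (h : colSum P c < P.sum) :
    0 < (P.filter (fun x => c < x)).card := by
  classical
  by_contra h0
  push_neg at h0
  interval_cases hh : (P.filter (fun x => c < x)).card
  have hall : ∀ x ∈ P, x ≤ c := by
    intro x hx
    by_contra hc
    push_neg at hc
    have : x ∈ P.filter (fun x => c < x) := Multiset.mem_filter.mpr ⟨hx, hc⟩
    simp_all [Multiset.card_eq_zero]
    have := hh x hx
    omega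
  have : colSum P c = P.sum := by
    unfold colSum
    rw [Multiset.map_congr rfl (fun x hx => min_eq_left (hall x hx))]
    simp
  omega

lemma level_mem (P : Multiset ℕ) (μ : ℕ) (h : μ ≤ P.sum) :
    μ ≤ colSum P (level P μ) := by
  have hne : {c | μ ≤ colSum P c}.Nonempty := ⟨P.sum, by simp [colSum_sum P, h]⟩
  exact Nat.sInf_mem hne

lemma level_lt (P : Multiset ℕ) (μ c : ℕ) (h : c < level P μ) :
    colSum P c < μ := by
  by_contra hc
  push_neg at hc
  have : level P μ ≤ c := Nat.sInf_le hc
  omega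


/-- For a partition `P` of `r` with level function `γ_P` and `2 ≤ μ ≤ r`:
if `γ_P(μ-1) = γ_P(μ) - 1` and `γ_P(μ-2) = γ_P(μ-1) - 1`, then `γ_P(μ+ε) = γ_P(μ) + ε`
for all `ε ≥ 1` with `μ + ε ≤ r`. -/
theorem level_eventually_linear (r : ℕ) (m : List ℕ) (hm : IsPartitionOf m r)
    (μ : ℕ) (hμ2 : 2 ≤ μ) (hμr : μ ≤ r)
    (h1 : level (↑m) (μ - 1) = level (↑m) μ - 1)
    (h2 : level (↑m) (μ - 2) = level (↑m) (μ - 1) - 1)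
    (ε : ℕ) (hε : 1 ≤ ε) (hεr : μ + ε ≤ r) :
    level (↑m) (μ + ε) = level (↑m) μ + ε := by
  classical
  set P : Multiset ℕ := ↑m with hP
  have hsum : P.sum = r := by simpa [hP] using hm.2.2
  set g := level P μ with hg
  -- basic facts
  have hg_mem : μ ≤ colSum P g := level_mem P μ (by omega)
  have hg1 : 1 ≤ g := by
    by_contra h
    have : g = 0 := by omega
    rw [this, colSum_zero] at hg_mem; omega
  -- level (μ-1) ≥ 1, so g ≥ 2
  have hl1_mem : μ - 1 ≤ colSum P (level P (μ-1)) := level_mem P (μ-1) (by omega)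
  have hl1_pos : 1 ≤ level P (μ-1) := by
    by_contra h
    have h0 : level P (μ-1) = 0 := by omega
    rw [h0, colSum_zero] at hl1_mem; omega
  have hg2 : 2 ≤ g := by omega
  -- f(g-1) = μ-1
  have hfg1 : colSum P (g-1) = μ - 1 := by
    have hlt : colSum P (g-1) < μ := level_lt P μ (g-1) (by omega)
    have : μ - 1 ≤ colSum P (g-1) := by rw [← h1]; exact hl1_mem
    omega
  -- f(g-2) = μ-2
  have hfg2 : colSum P (g-2) = μ - 2 := by
    rcases Nat.lt_or_ge μ 3 with h3 | h3
    · -- μ = 2, show g = 2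
      have hμ : μ = 2 := by omega
      have hl0 : level P (μ-2) = 0 := by
        have : (0 : ℕ) ∈ {c | μ - 2 ≤ colSum P c} := by simp [hμ]
        exact Nat.le_zero.mp (Nat.sInf_le this)
      have : g = 2 := by rw [h1] at h2; omega
      rw [this]; simp [colSum_zero, hμ]
    · have hlt : colSum P (g-2) < μ - 1 := by
        have := level_lt P (μ-1) (g-2) (by omega)
        omega
      have hge : μ - 2 ≤ colSum P (g-2) := by
        have := level_mem P (μ-2) (by omega)
        rw [h2, h1] at this
        exact this
      omega
  -- step at g-2 equals 1
  have hstep : (P.filter (fun x => (g-2) < x)).card = 1 := by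
    have := colSum_succ P (g-2)
    have he : g - 2 + 1 = g - 1 := by omega
    rw [he] at this
    omega
  have hstep_le : ∀ c, g - 2 ≤ c → (P.filter (fun x => c < x)).card ≤ 1 := by
    intro c hc
    calc (P.filter (fun x => c < x)).card ≤ (P.filter (fun x => (g-2) < x)).card :=
          step_antitone P hc
      _ = 1 := hstep
  -- f(g) = μ
  have hfg : colSum P g = μ := by
    have := colSum_succ P (g-1)
    have he : g - 1 + 1 = g := by omega
    rw [he] at this
    have := hstep_le (g-1) (by omega)
    omega
  -- claim: ∀ k, μ + k ≤ r → colSum P (g+k) = μ + k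
  have claim : ∀ k, μ + k ≤ r → colSum P (g + k) = μ + k := by
    intro k
    induction k with
    | zero => intro _; simpa using hfg
    | succ n ih =>
      intro hn
      have hprev : colSum P (g + n) = μ + n := ih (by omega)
      have hsucc := colSum_succ P (g + n)
      have hpos : 0 < (P.filter (fun x => (g+n) < x)).card :=
        step_pos P (g+n) (by omega)
      have hle : (P.filter (fun x => (g+n) < x)).card ≤ 1 := hstep_le _ (by omega)
      have he : g + (n+1) = g + n + 1 := rfl
      rw [he]
      omega
  -- finish
  have hmem : colSum P (g + ε) = μ + ε := claim ε hεr
  have hprev : colSum P (g + ε - 1) = μ + ε - 1 := by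
    have := claim (ε - 1) (by omega)
    have he : g + (ε - 1) = g + ε - 1 := by omega
    rw [he] at this
    omega
  apply le_antisymm
  · exact Nat.sInf_le (by simp [hmem])
  · by_contra h
    push_neg at h
    have hmem' : μ + ε ≤ colSum P (level P (μ+ε)) := level_mem P (μ+ε) (by omega)
    have : colSum P (level P (μ+ε)) ≤ colSum P (g + ε - 1) :=
      colSum_mono P (by omega)
    omega
end

section
/- Let P = (m_1,...,m_ℓ) be a partition of r with conjugate partition (n_1,...,n_{m_1}) and level function γ_P. For every j with 1 ≤ j ≤ ℓ, setting μ_min = n_1 + n_2 + ... + n_{m_j}, one has the identity min over 1 ≤ μ ≤ r of ( j·γ_P(μ) + r − μ ) = m_1 + m_2 + ... + m_j, and this minimum is attained at μ = μ_min. -/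
lemma colSum_coe (m : List ℕ) (c : ℕ) :
    colSum (↑m) c = (m.map (fun x => min x c)).sum := by
  simp [colSum]

lemma split_sum (m : List ℕ) (c : ℕ) :
    (m.map (fun x => min x c)).sum + (m.map (fun x => x - c)).sum = m.sum := by
  induction m with
  | nil => simp
  | cons a t ih =>
    simp only [List.map_cons, List.sum_cons]
    omega

lemma sum_ge_const (l : List ℕ) (c : ℕ) (h : ∀ x ∈ l, c ≤ x) :
    l.sum = l.length * c + (l.map (fun x => x - c)).sum := by
  induction l with
  | nil => simp
  | cons a t ih =>
    simp only [List.map_cons, List.sum_cons, List.length_cons]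
    have h1 := h a (by simp)
    have h2 := ih (fun x hx => h x (by simp [hx]))
    rw [Nat.succ_mul]
    omega

lemma take_map_sum_le (l : List ℕ) (j : ℕ) (f : ℕ → ℕ) :
    ((l.take j).map f).sum ≤ (l.map f).sum := by
  conv_rhs => rw [← List.take_append_drop j l]
  rw [List.map_append, List.sum_append]
  exact Nat.le_add_right _ _

lemma colSum_mono_s2 (l : List ℕ) {c c' : ℕ} (h : c ≤ c') :
    (l.map (fun x => min x c)).sum ≤ (l.map (fun x => min x c')).sum := by
  apply List.sum_le_sum
  intro x _
  exact min_le_min le_rfl h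

/-- For a partition `P = (m_1,…,m_ℓ)` of `r` with conjugate `(n_1,…,n_{m_1})`
and level function `γ_P`, and any `1 ≤ j ≤ ℓ`, setting `μ_min = n_1 + … + n_{m_j}` (which is
`colSum P m_j`), one has `min_{1 ≤ μ ≤ r} ( j·γ_P(μ) + r − μ ) = m_1 + … + m_j`, the minimum
being attained at `μ = μ_min`. -/
theorem min_level_combination (r : ℕ) (m : List ℕ) (hm : IsPartitionOf m r)
    (j : ℕ) (hj1 : 1 ≤ j) (hj2 : j ≤ m.length) :
    (∀ μ ∈ Finset.Icc 1 r, (m.take j).sum ≤ j * level (↑m) μ + (r - μ)) ∧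
    (j * level (↑m) (colSum (↑m) (m.getD (j - 1) 0))
        + (r - colSum (↑m) (m.getD (j - 1) 0)) = (m.take j).sum) := by
  obtain ⟨hsort, hpos, hsum⟩ := hm
  have hjlt : j - 1 < m.length := by omega
  have hmj_get : m.getD (j - 1) 0 = m[j - 1] := List.getD_eq_getElem m 0 hjlt
  set mj := m.getD (j - 1) 0 with hmjdef
  -- sortedness facts
  have hrel : ∀ (i k : ℕ) (hi : i < m.length) (hk : k < m.length), i ≤ k → m[k] ≤ m[i] := by
    intro i k hi hk hik
    rcases eq_or_lt_of_le hik with h | h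
    · subst h; exact le_rfl
    · exact List.pairwise_iff_get.mp hsort ⟨i, hi⟩ ⟨k, hk⟩ h
  have htake : ∀ x ∈ m.take j, mj ≤ x := by
    intro x hx
    obtain ⟨i, hi, rfl⟩ := List.mem_iff_getElem.mp hx
    have hi' : i < j := lt_of_lt_of_le hi (by simp)
    have him : i < m.length := lt_of_lt_of_le hi (by simp)
    rw [List.getElem_take]
    rw [hmj_get]
    exact hrel i (j - 1) him hjlt (by omega)
  have hdrop : ∀ x ∈ m.drop j, x ≤ mj := by
    intro x hx
    obtain ⟨i, hi, rfl⟩ := List.mem_iff_getElem.mp hx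
    rw [List.getElem_drop]
    rw [hmj_get]
    have him : j + i < m.length := by
      have := hi; simp [List.length_drop] at this; omega
    exact hrel (j - 1) (j + i) hjlt him (by omega)
  have hmj_mem : mj ∈ m := by rw [hmj_get]; exact List.getElem_mem _
  have hmjpos : 0 < mj := hpos _ hmj_mem
  have htakelen : (m.take j).length = j := by simp [hj2]
  -- colSum ≤ r
  have hcolle : ∀ c, colSum (↑m) c ≤ r := by
    intro c
    rw [colSum_coe, ← hsum]
    have := split_sum m c
    omega
  -- nonemptiness of the level set for μ ≤ r
  have hwit : ∀ μ : ℕ, μ ≤ r → μ ≤ colSum (↑m) r := by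
    intro μ hμ
    rw [colSum_coe]
    have hmap : m.map (fun x => min x r) = m.map id := by
      apply List.map_congr_left
      intro x hx
      have : x ≤ m.sum := List.le_sum_of_mem hx
      simp only [id]
      omega
    rw [hmap, List.map_id]
    omega
  constructor
  · intro μ hμ
    simp only [Finset.mem_Icc] at hμ
    obtain ⟨hμ1, hμ2⟩ := hμ
    have hne : {c | μ ≤ colSum (↑m) c}.Nonempty := ⟨r, hwit μ hμ2⟩
    have hC : μ ≤ colSum (↑m) (level (↑m) μ) := Nat.sInf_mem hne
    set c := level (↑m) μ with hc
    have step1 : (m.take j).sum ≤ j * c + ((m.take j).map (fun x => x - c)).sum := by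
      have h1 : (m.take j).sum ≤ ((m.take j).map (fun x => min x c)).sum
          + ((m.take j).map (fun x => x - c)).sum := (split_sum (m.take j) c).ge
      have h2 : ((m.take j).map (fun x => min x c)).sum ≤ j * c := by
        have : ((m.take j).map (fun x => min x c)).sum ≤
            ((m.take j).map (fun _ => c)).sum :=
          List.sum_le_sum (fun x _ => min_le_right _ _)
        rw [List.map_const', htakelen, List.sum_replicate, smul_eq_mul] at this
        exact this
      omega
    have step2 : ((m.take j).map (fun x => x - c)).sum ≤ (m.map (fun x => x - c)).sum :=
      take_map_sum_le m j _
    have step3 : (m.map (fun x => x - c)).sum = r - colSum (↑m) c := by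
      have := split_sum m c
      rw [colSum_coe, ← hsum]
      omega
    have step4 : r - colSum (↑m) c ≤ r - μ := Nat.sub_le_sub_left hC r
    have : ((m.take j).map (fun x => x - c)).sum ≤ r - μ := by omega
    linarith
  · -- equality part
    set μ₀ := colSum (↑m) mj with hμ₀
    have hlev : level (↑m) μ₀ = mj := by
      unfold level
      apply le_antisymm
      · exact Nat.sInf_le (show μ₀ ≤ colSum (↑m) mj from le_rfl)
      · apply le_csInf ((⟨mj, show μ₀ ≤ colSum (↑m) mj from le_rfl⟩ :
            {c | μ₀ ≤ colSum (↑m) c}.Nonempty))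
        intro c hc
        by_contra hlt
        push_neg at hlt
        -- c < mj, show colSum c < μ₀
        obtain ⟨s, t, heq⟩ := List.append_of_mem hmj_mem
        have habs : colSum (↑m) c < μ₀ := by
          rw [hμ₀, colSum_coe, colSum_coe, heq]
          simp only [List.map_append, List.sum_append, List.map_cons, List.sum_cons]
          have h1 : (s.map (fun x => min x c)).sum ≤ (s.map (fun x => min x mj)).sum :=
            colSum_mono_s2 s (le_of_lt hlt)
          have h2 : (t.map (fun x => min x c)).sum ≤ (t.map (fun x => min x mj)).sum :=
            colSum_mono_s2 t (le_of_lt hlt)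
          have h3 : min mj c < min mj mj := by omega
          omega
        have := hc
        simp only [Set.mem_setOf_eq] at this
        omega
    rw [hlev]
    have e1 : (m.take j).sum = j * mj + ((m.take j).map (fun x => x - mj)).sum := by
      have := sum_ge_const (m.take j) mj htake
      rwa [htakelen] at this
    have e2 : (m.map (fun x => x - mj)).sum = r - μ₀ := by
      have := split_sum m mj
      rw [hμ₀, colSum_coe, ← hsum]
      omega
    have e3 : (m.map (fun x => x - mj)).sum = ((m.take j).map (fun x => x - mj)).sum := by
      conv_lhs => rw [← List.take_append_drop j m]
      rw [List.map_append, List.sum_append]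
      have : ((m.drop j).map (fun x => x - mj)).sum = 0 := by
        apply List.sum_eq_zero
        intro x hx
        simp only [List.mem_map] at hx
        obtain ⟨y, hy, rfl⟩ := hx
        have := hdrop y hy
        omega
      omega
    have hμ₀le : μ₀ ≤ r := hcolle mj
    linarith [e1, e2, e3]
end

section
/- Let r ≥ 2 and n ≥ 3, and suppose that for some fixed index i_0 the conjugacy class C_{i_0} ⊂ GL_r(ℂ) has r distinct eigenvalues, equivalently P^{i_0} = (1,1,...,1). For each i = 1,...,n, let C_i ⊂ GL_r(ℂ) be a conjugacy class, let P^i be the partition of r defined as the union of the conjugates of the Jordan-block partitions of C_i, let d_i = dim C_i = r(r+1) − 2 Σ_{μ=1}^r γ_{P^i}(μ), and let R_i = r − γ_{P^i}(r). Then the two conditions (α) d_1 + ... + d_n ≥ 2r^2 − 2 and (β) R_1 + ... + R̂_i + ... + R_n ≥ r for all i hold jointly if and only if Σ_{i=1}^n γ_{P^i}(μ) < (n−2)μ + 2 for all μ = 2,...,r. -/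
lemma colSum_mono_s15 (P : Multiset ℕ) {c c' : ℕ} (h : c ≤ c') : colSum P c ≤ colSum P c' :=
  Multiset.sum_map_le_sum_map _ _ (fun x _ => min_le_min le_rfl h)

lemma colSum_self (P : Multiset ℕ) {c : ℕ} (h : ∀ x ∈ P, x ≤ c) : colSum P c = P.sum := by
  unfold colSum
  rw [show P.map (fun x => min x c) = P.map id from Multiset.map_congr rfl
    (fun x hx => min_eq_left (h x hx))]
  simp

lemma part_le_sum {P : Multiset ℕ} {x : ℕ} (hx : x ∈ P) : x ≤ P.sum :=
  Multiset.single_le_sum (fun _ _ => Nat.zero_le _) x hx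

-- basic level facts, assuming μ ≤ P.sum
lemma level_spec (P : Multiset ℕ) {μ : ℕ} (h : μ ≤ P.sum) : μ ≤ colSum P (level P μ) := by
  have hne : {c | μ ≤ colSum P c}.Nonempty :=
    ⟨P.sum, by simpa [colSum_self P (fun x hx => part_le_sum hx)] using h⟩
  exact Nat.sInf_mem hne

lemma level_le {P : Multiset ℕ} {μ c : ℕ} (h : μ ≤ colSum P c) : level P μ ≤ c :=
  Nat.sInf_le h

lemma lt_of_lt_level {P : Multiset ℕ} {μ c : ℕ} (h : c < level P μ) : colSum P c < μ := by
  have := Nat.notMem_of_lt_sInf (s := {c | μ ≤ colSum P c}) h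
  simpa using this

lemma level_pos {P : Multiset ℕ} {μ : ℕ} (h1 : 1 ≤ μ) (h2 : μ ≤ P.sum) : 1 ≤ level P μ := by
  by_contra h
  push_neg at h
  interval_cases h' : level P μ
  · have := level_spec P h2
    rw [h'] at this
    simp [colSum_zero] at this
    omega

lemma level_mono (P : Multiset ℕ) {μ μ' : ℕ} (h : μ ≤ μ') (h2 : μ' ≤ P.sum) :
    level P μ ≤ level P μ' :=
  level_le (le_trans h (level_spec P h2))

lemma level_le_self (P : Multiset ℕ) {μ : ℕ} (h : μ ≤ P.sum) : level P μ ≤ μ := by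
  apply level_le
  rcases Classical.em (∃ x ∈ P, μ ≤ x) with ⟨x, hx, hxμ⟩ | he
  · calc μ = min x μ := (min_eq_right hxμ).symm
    _ ≤ colSum P μ := Multiset.single_le_sum (fun _ _ => Nat.zero_le _) _
        (Multiset.mem_map_of_mem _ hx)
  · push_neg at he
    rw [colSum_self P (fun x hx => le_of_lt (he x hx))]
    exact h

lemma part_le_level_sum {P : Multiset ℕ} {x : ℕ} (hx : x ∈ P) : x ≤ level P P.sum := by
  set a := level P P.sum with ha
  have h1 : colSum P a = P.sum := le_antisymm (colSum_le_sum P a) (level_spec P le_rfl)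
  by_contra h
  push_neg at h
  have : colSum P a < P.sum := by
    have := Multiset.sum_lt_sum (s := P) (f := fun x => min x a) (g := id)
      (fun y _ => min_le_left y a) ⟨x, hx, by simpa [min_eq_right h.le] using h⟩
    simpa [colSum] using this
  omega

lemma key_pointwise {a c x : ℕ} (hca : c ≤ a) (hxa : x ≤ a) : c * x ≤ a * min x c := by
  rcases le_total x c with h | h
  · rw [min_eq_left h]
    exact Nat.mul_le_mul_right x hca
  · rw [min_eq_right h]
    calc c * x ≤ c * a := Nat.mul_le_mul_left c hxa
    _ = a * c := Nat.mul_comm c a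

lemma key_colSum (P : Multiset ℕ) {a c : ℕ} (hca : c ≤ a) (hxa : ∀ x ∈ P, x ≤ a) :
    c * P.sum ≤ a * colSum P c := by
  unfold colSum
  rw [show c * P.sum = (P.map (fun x => c * x)).sum by rw [Multiset.sum_map_mul_left]; simp,
    show (P.map fun x => min x c).sum = (P.map (fun x => min x c)).sum from rfl]
  have : a * (P.map (fun x => min x c)).sum = (P.map (fun x => a * min x c)).sum := by
    rw [Multiset.sum_map_mul_left]
  rw [this]
  exact Multiset.sum_map_le_sum_map _ _ (fun x hx => key_pointwise hca (hxa x hx))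

open Finset in
lemma level_eq_card (P : Multiset ℕ) {r μ : ℕ} (hsum : P.sum = r) (h1 : 1 ≤ μ) (h2 : μ ≤ r) :
    level P μ = ((Finset.range r).filter (fun c => colSum P c < μ)).card := by
  have hlev : level P μ ≤ r := le_trans (level_le_self P (hsum ▸ h2)) h2
  have : (Finset.range r).filter (fun c => colSum P c < μ) = Finset.range (level P μ) := by
    ext c
    simp only [Finset.mem_filter, Finset.mem_range]
    constructor
    · rintro ⟨_, hc⟩
      by_contra hcl
      push_neg at hcl
      exact absurd (le_trans (level_spec P (hsum ▸ h2)) (colSum_mono_s15 P hcl)) (by omega)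
    · intro hc
      exact ⟨lt_of_lt_of_le hc hlev, lt_of_lt_level hc⟩
  rw [this, Finset.card_range]

lemma sum_min_aux {x r : ℕ} (hx : x ≤ r) :
    2 * (∑ c ∈ Finset.range r, min x c) + (x * x + x) = 2 * (r * x) := by
  induction r with
  | zero =>
    obtain rfl : x = 0 := by omega
    simp
  | succ m ih =>
    rcases Nat.lt_or_ge m x with h | h
    · have hx' : x = m + 1 := by omega
      subst hx'
      have hmin : ∀ c ∈ Finset.range (m+1), min (m+1) c = c := by
        intro c hc
        simp only [Finset.mem_range] at hc
        omega
      rw [Finset.sum_congr rfl hmin]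
      have hG : (∑ i ∈ Finset.range (m+1), i) * 2 = (m+1) * m := by
        simpa using Finset.sum_range_id_mul_two (m+1)
      nlinarith [hG]
    · rw [Finset.sum_range_succ, min_eq_left h, Nat.succ_mul]
      have := ih (by omega)
      linarith

lemma multiset_sum_swap (P : Multiset ℕ) (r : ℕ) (f : ℕ → ℕ → ℕ) :
    ∑ c ∈ Finset.range r, (P.map (fun x => f x c)).sum
      = (P.map (fun x => ∑ c ∈ Finset.range r, f x c)).sum := by
  induction P using Multiset.induction_on with
  | empty => simp
  | cons a s ih => simp [Finset.sum_add_distrib, ih]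

/-- The key identity: `2 Σ_{μ=1}^r γ_P(μ) = Σ_{x∈P} x(x+1)`. -/
lemma two_mul_sum_level (P : Multiset ℕ) {r : ℕ} (hsum : P.sum = r) (hpos : ∀ x ∈ P, 0 < x) :
    2 * (∑ μ ∈ Finset.Icc 1 r, level P μ) = (P.map (fun x => x * x + x)).sum := by
  -- step 1: Σ levels = Σ_{c<r} (r - colSum P c)
  have h1 : ∑ μ ∈ Finset.Icc 1 r, level P μ
      = ∑ c ∈ Finset.range r, (r - colSum P c) := by
    have : ∀ μ ∈ Finset.Icc 1 r, level P μ
        = ((Finset.range r).filter (fun c => colSum P c < μ)).card := by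
      intro μ hμ
      simp only [Finset.mem_Icc] at hμ
      exact level_eq_card P hsum hμ.1 hμ.2
    rw [Finset.sum_congr rfl this]
    simp_rw [Finset.card_filter]
    rw [Finset.sum_comm]
    apply Finset.sum_congr rfl
    intro c _
    rw [← Finset.card_filter]
    have hcs : colSum P c ≤ r := hsum ▸ colSum_le_sum P c
    have : (Finset.Icc 1 r).filter (fun μ => colSum P c < μ) = Finset.Icc (colSum P c + 1) r := by
      ext μ
      simp only [Finset.mem_filter, Finset.mem_Icc]
      omega
    rw [this, Nat.card_Icc]
    omega
  -- step 2
  have h2 : ∑ c ∈ Finset.range r, colSum P c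
      = (P.map (fun x => ∑ c ∈ Finset.range r, min x c)).sum := by
    exact multiset_sum_swap P r (fun x c => min x c)
  -- combine
  have hcs : ∀ c, colSum P c ≤ r := fun c => hsum ▸ colSum_le_sum P c
  have h3 : (∑ c ∈ Finset.range r, (r - colSum P c)) + ∑ c ∈ Finset.range r, colSum P c
      = r * r := by
    rw [← Finset.sum_add_distrib]
    have : ∀ c ∈ Finset.range r, (r - colSum P c) + colSum P c = r := by
      intro c _
      have := hcs c
      omega
    rw [Finset.sum_congr rfl this]
    simp [mul_comm]
  have h4 : 2 * ((P.map (fun x => ∑ c ∈ Finset.range r, min x c)).sum)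
        + (P.map (fun x => x * x + x)).sum = 2 * (r * P.sum) := by
    rw [show 2 * (r * P.sum) = (P.map (fun x => 2 * (r * x))).sum by
      rw [Multiset.sum_map_mul_left, Multiset.sum_map_mul_left]; simp]
    rw [show 2 * ((P.map (fun x => ∑ c ∈ Finset.range r, min x c)).sum)
        = (P.map (fun x => 2 * ∑ c ∈ Finset.range r, min x c)).sum by
      rw [Multiset.sum_map_mul_left]]
    rw [← Multiset.sum_map_add]
    congr 1
    apply Multiset.map_congr rfl
    intro x hx
    exact sum_min_aux (hsum ▸ part_le_sum hx)
  rw [hsum] at h4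
  have h13 : (∑ μ ∈ Finset.Icc 1 r, level P μ) + ∑ c ∈ Finset.range r, colSum P c = r * r := by
    rw [h1]; exact h3
  rw [h2] at h13
  linarith

lemma level_replicate_one {r μ : ℕ} (h1 : 1 ≤ μ) (h2 : μ ≤ r) :
    level (Multiset.replicate r 1) μ = 1 := by
  have hsum : (Multiset.replicate r 1).sum = r := by simp
  refine le_antisymm (level_le ?_) (level_pos h1 (by rw [hsum]; exact h2))
  have : colSum (Multiset.replicate r 1) 1 = r := by
    rw [colSum_self _ (fun x hx => by rw [Multiset.eq_of_mem_replicate hx])]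
    exact hsum
  omega

lemma gauss_Icc (r : ℕ) : 2 * ∑ μ ∈ Finset.Icc 1 r, (μ : ℤ) = r * (r + 1) := by
  induction r with
  | zero => simp
  | succ m ih =>
    rw [Finset.sum_Icc_succ_top (by omega)]
    push_cast
    push_cast at ih
    ring_nf
    ring_nf at ih
    linarith

/-- Equality-forcing: if `r·(γ(μ)-1) = γ(r)·(μ-1)` then `P` is a rectangle. -/
lemma rigid (P : Multiset ℕ) {r μ : ℕ} (hsum : P.sum = r) (hpos : ∀ x ∈ P, 0 < x)
    (hμ1 : 2 ≤ μ) (hμr : μ ≤ r)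
    (heq : r * (level P μ - 1) = (level P r) * (μ - 1)) :
    (2 * ∑ μ' ∈ Finset.Icc 1 r, level P μ' = r * (level P r + 1)) ∧
    (P.card * (level P μ - 1) = μ - 1) := by
  set a := level P r with ha
  set g := level P μ with hg
  have hr1 : 1 ≤ r := by omega
  have ha1 : 1 ≤ a := level_pos hr1 (by omega)
  have hg1 : 1 ≤ g := level_pos (by omega) (by omega)
  have hga : g ≤ a := level_mono P hμr (by omega)
  have hparts : ∀ x ∈ P, x ≤ a := by
    intro x hx
    have := part_le_level_sum hx
    rwa [hsum] at this
  -- g ≥ 2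
  have hg2 : 2 ≤ g := by
    by_contra hcon
    have : g = 1 := by omega
    rw [this] at heq
    simp at heq
    have : 0 < a * (μ - 1) := Nat.mul_pos ha1 (by omega)
    omega
  set c := g - 1 with hc
  have hc1 : 1 ≤ c := by omega
  have hca : c ≤ a := by omega
  have hclta : c < a := by omega
  have hcollt : colSum P c < μ := lt_of_lt_level (by omega)
  have hkey : c * r ≤ a * colSum P c := by
    have := key_colSum P hca hparts
    rwa [hsum] at this
  have hchain : a * colSum P c ≤ a * (μ - 1) := Nat.mul_le_mul_left a (by omega)
  have heq' : a * (μ - 1) = c * r := by rw [← heq]; ring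
  have hcoleq : a * colSum P c = c * r := by omega
  have hcol : colSum P c = μ - 1 := by
    have : a * colSum P c = a * (μ - 1) := by omega
    exact Nat.eq_of_mul_eq_mul_left (by omega) this
  -- pointwise equality
  have hsums : (P.map (fun x => a * min x c)).sum = (P.map (fun x => c * x)).sum := by
    rw [Multiset.sum_map_mul_left, Multiset.sum_map_mul_left]
    change a * colSum P c = _
    rw [hcoleq]
    simp [hsum]
  have hpw : ∀ x ∈ P, c * x = a * min x c := by
    by_contra hcon
    push_neg at hcon
    obtain ⟨x, hx, hne⟩ := hcon
    have hlt : (P.map (fun x => c * x)).sum < (P.map (fun x => a * min x c)).sum :=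
      Multiset.sum_lt_sum (fun y hy => key_pointwise hca (hparts y hy))
        ⟨x, hx, lt_of_le_of_ne (key_pointwise hca (hparts x hx)) hne⟩
    omega
  have hall : ∀ x ∈ P, x = a := by
    intro x hx
    have hxa := hparts x hx
    have hxpos := hpos x hx
    have := hpw x hx
    rcases le_or_gt x c with h | h
    · rw [min_eq_left h] at this
      nlinarith
    · rw [min_eq_right h.le] at this
      have : c * x = c * a := by rw [this]; ring
      exact Nat.eq_of_mul_eq_mul_left (by omega) this
  -- rectangle conclusions
  have hcard : P.card * a = r := by
    rw [← hsum]
    rw [show P = Multiset.replicate P.card a from Multiset.eq_replicate_card.mpr hall]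
    simp [Multiset.sum_replicate, mul_comm]
  constructor
  · have hid := two_mul_sum_level P hsum hpos
    rw [show P.map (fun x => x * x + x) = P.map (fun _ => a * a + a) from
      Multiset.map_congr rfl (fun x hx => by rw [hall x hx])] at hid
    rw [Multiset.map_const', Multiset.sum_replicate] at hid
    rw [hid, smul_eq_mul]
    rw [show P.card * (a * a + a) = (P.card * a) * (a + 1) by ring, hcard]
  · have : colSum P c = P.card * c := by
      unfold colSum
      rw [show P.map (fun x => min x c) = P.map (fun _ => c) from
        Multiset.map_congr rfl (fun x hx => by rw [hall x hx, min_eq_right hca])]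
      rw [Multiset.map_const', Multiset.sum_replicate, smul_eq_mul]
    omega


set_option maxHeartbeats 2000000

/-- Let `r ≥ 2`, `n ≥ 3`, and for each `i` let `P^i` be the partition of
`r` attached to a conjugacy class `C_i ⊂ GL_r(ℂ)` (the union of the conjugates of its
Jordan-block partitions), with `P^{i_0} = (1,…,1)` for some fixed `i_0` (i.e. `C_{i_0}`
has `r` distinct eigenvalues).  With `d_i = dim C_i = r(r+1) − 2 Σ_{μ=1}^r γ_{P^i}(μ)` and
`R_i = r − γ_{P^i}(r)`, the two conditions
(α) `d_1 + … + d_n ≥ 2r² − 2` and (β) `Σ_{k ≠ i} R_k ≥ r` for all `i`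
hold jointly iff `Σ_{i=1}^n γ_{P^i}(μ) < (n−2)μ + 2` for all `μ = 2,…,r`. -/
theorem simpson_criterion_iff_OK (n r : ℕ) (hn : 3 ≤ n) (hr : 2 ≤ r)
    (P : Fin n → List ℕ) (hP : ∀ i, IsPartitionOf (P i) r)
    (i0 : Fin n) (hi0 : P i0 = List.replicate r 1)
    (d : Fin n → ℤ)
    (hd : ∀ i, d i = (r : ℤ) * (r + 1) - 2 * ∑ μ ∈ Finset.Icc 1 r, (level (↑(P i)) μ : ℤ))
    (R : Fin n → ℤ) (hR : ∀ i, R i = (r : ℤ) - (level (↑(P i)) r : ℤ)) :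
    ((2 * (r : ℤ) ^ 2 - 2 ≤ ∑ i, d i) ∧
      (∀ i, (r : ℤ) ≤ ∑ k ∈ Finset.univ.erase i, R k)) ↔
    (∀ μ ∈ Finset.Icc 2 r,
      ∑ i, (level (↑(P i)) μ : ℤ) < ((n : ℤ) - 2) * (μ : ℤ) + 2) := by
  have hQsum : ∀ i, ((P i : Multiset ℕ)).sum = r := by
    intro i
    have := (hP i).2.2
    simpa using this
  have hQpos : ∀ i, ∀ x ∈ (P i : Multiset ℕ), 0 < x := by
    intro i x hx
    exact (hP i).2.1 x (by simpa using hx)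
  have hi0' : (P i0 : Multiset ℕ) = Multiset.replicate r 1 := by
    rw [hi0, Multiset.coe_replicate]
  have ha1 : ∀ i, 1 ≤ level (↑(P i) : Multiset ℕ) r :=
    fun i => level_pos (by omega) (le_of_eq (hQsum i).symm)
  have har : ∀ i, level (↑(P i) : Multiset ℕ) r ≤ r :=
    fun i => level_le_self _ (le_of_eq (hQsum i).symm)
  have hai0 : level (↑(P i0) : Multiset ℕ) r = 1 := by
    rw [hi0']
    exact level_replicate_one (by omega) le_rfl
  have hcardE : (Finset.univ.erase i0).card = n - 1 := by
    rw [Finset.card_erase_of_mem (Finset.mem_univ i0)]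
    simp
  have hlev1 : ∀ i, level (↑(P i) : Multiset ℕ) 1 = 1 := by
    intro i
    refine le_antisymm ?_ (level_pos le_rfl (by rw [hQsum i]; omega))
    have := level_le_self (↑(P i) : Multiset ℕ) (μ := 1) (by rw [hQsum i]; omega)
    omega
  have hn1 : ((n - 1 : ℕ) : ℤ) = (n : ℤ) - 1 := by omega
  constructor
  · -- hard direction
    rintro ⟨hα, hβ⟩ μ hμ
    simp only [Finset.mem_Icc] at hμ
    obtain ⟨hμ2, hμr⟩ := hμ
    by_contra hcon
    push_neg at hcon
    have hg1 : ∀ i, 1 ≤ level (↑(P i) : Multiset ℕ) μ :=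
      fun i => level_pos (by omega) (by rw [hQsum i]; omega)
    have hga : ∀ i, level (↑(P i) : Multiset ℕ) μ ≤ level (↑(P i) : Multiset ℕ) r :=
      fun i => level_mono _ hμr (le_of_eq (hQsum i).symm)
    have hgi0 : level (↑(P i0) : Multiset ℕ) μ = 1 := by
      rw [hi0']
      exact level_replicate_one (by omega) hμr
    -- per-partition inequality, in ℕ then ℤ
    have hF5 : ∀ i, (level (↑(P i) : Multiset ℕ) μ - 1) * r
        ≤ level (↑(P i) : Multiset ℕ) r * (μ - 1) := by
      intro i
      have hcol : colSum (↑(P i)) (level (↑(P i) : Multiset ℕ) μ - 1) < μ :=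
        lt_of_lt_level (by have := hg1 i; omega)
      have hkey : (level (↑(P i) : Multiset ℕ) μ - 1) * ((P i : Multiset ℕ)).sum
          ≤ level (↑(P i) : Multiset ℕ) r * colSum (↑(P i)) (level (↑(P i) : Multiset ℕ) μ - 1) :=
        key_colSum _ (by have := hga i; omega)
          (fun x hx => by have := part_le_level_sum hx; rwa [hQsum i] at this)
      rw [hQsum i] at hkey
      exact le_trans hkey (Nat.mul_le_mul_left _ (by omega))
    have hF5' : ∀ i, (r : ℤ) * (level (↑(P i) : Multiset ℕ) μ : ℤ) - r
        ≤ (level (↑(P i) : Multiset ℕ) r : ℤ) * ((μ : ℤ) - 1) := by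
      intro i
      have h0 := hF5 i
      have h1 := hg1 i
      have h2 := (Nat.cast_le (α := ℤ)).mpr h0
      push_cast [Nat.cast_sub h1, Nat.cast_sub (show 1 ≤ μ by omega)] at h2
      linarith
    -- β at i0
    have hβ0 : (r : ℤ) ≤ ∑ k ∈ Finset.univ.erase i0,
        ((r : ℤ) - (level (↑(P k) : Multiset ℕ) r : ℤ)) := by
      have := hβ i0
      rwa [Finset.sum_congr rfl (fun k _ => hR k)] at this
    have hsumE_a : ∑ k ∈ Finset.univ.erase i0,
        ((r : ℤ) - (level (↑(P k) : Multiset ℕ) r : ℤ))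
        = ((n : ℤ) - 1) * r - ∑ k ∈ Finset.univ.erase i0,
            (level (↑(P k) : Multiset ℕ) r : ℤ) := by
      rw [Finset.sum_sub_distrib]
      congr 1
      rw [Finset.sum_const, hcardE, nsmul_eq_mul, hn1]
    have hEa : ∑ k ∈ Finset.univ.erase i0, (level (↑(P k) : Multiset ℕ) r : ℤ)
        ≤ ((n : ℤ) - 2) * r := by
      rw [hsumE_a] at hβ0
      linarith
    -- total S(μ)
    have hStot : (∑ i, (level (↑(P i) : Multiset ℕ) μ : ℤ))
        = 1 + ∑ k ∈ Finset.univ.erase i0, (level (↑(P k) : Multiset ℕ) μ : ℤ) := by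
      rw [← Finset.add_sum_erase _ _ (Finset.mem_univ i0), hgi0]
      norm_num
    have hScon : (1 : ℤ) + ∑ k ∈ Finset.univ.erase i0, (level (↑(P k) : Multiset ℕ) μ : ℤ)
        ≥ ((n : ℤ) - 2) * μ + 2 := by
      rw [← hStot]
      exact hcon
    -- sum the per-partition inequalities over the erase set
    have hsumF5 : ∑ k ∈ Finset.univ.erase i0,
          ((r : ℤ) * (level (↑(P k) : Multiset ℕ) μ : ℤ) - r)
        ≤ ∑ k ∈ Finset.univ.erase i0,
          (level (↑(P k) : Multiset ℕ) r : ℤ) * ((μ : ℤ) - 1) :=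
      Finset.sum_le_sum (fun k _ => hF5' k)
    have hlhs : ∑ k ∈ Finset.univ.erase i0,
          ((r : ℤ) * (level (↑(P k) : Multiset ℕ) μ : ℤ) - r)
        = r * (∑ k ∈ Finset.univ.erase i0, (level (↑(P k) : Multiset ℕ) μ : ℤ))
            - ((n : ℤ) - 1) * r := by
      rw [Finset.sum_sub_distrib, Finset.mul_sum, Finset.sum_const, hcardE, nsmul_eq_mul, hn1]
    have hrhs : ∑ k ∈ Finset.univ.erase i0,
          (level (↑(P k) : Multiset ℕ) r : ℤ) * ((μ : ℤ) - 1)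
        = (∑ k ∈ Finset.univ.erase i0, (level (↑(P k) : Multiset ℕ) r : ℤ)) * ((μ : ℤ) - 1) :=
      (Finset.sum_mul _ _ _).symm
    have hμ' : (2 : ℤ) ≤ (μ : ℤ) := by exact_mod_cast hμ2
    have hrpos : (0 : ℤ) < r := by exact_mod_cast (by omega : 0 < r)
    -- squeeze
    have hBub : (∑ k ∈ Finset.univ.erase i0, (level (↑(P k) : Multiset ℕ) r : ℤ)) * ((μ : ℤ) - 1)
        ≤ ((n : ℤ) - 2) * r * ((μ : ℤ) - 1) :=
      mul_le_mul_of_nonneg_right hEa (by linarith)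
    have hgE_ub : (r : ℤ) * (∑ k ∈ Finset.univ.erase i0, (level (↑(P k) : Multiset ℕ) μ : ℤ))
        ≤ ((n : ℤ) - 1) * r + ((n : ℤ) - 2) * r * ((μ : ℤ) - 1) := by
      rw [hrhs] at hsumF5
      rw [hlhs] at hsumF5
      linarith
    have hgE_lb : ((n : ℤ) - 2) * μ + 1
        ≤ ∑ k ∈ Finset.univ.erase i0, (level (↑(P k) : Multiset ℕ) μ : ℤ) := by linarith
    have hgE_eq : ∑ k ∈ Finset.univ.erase i0, (level (↑(P k) : Multiset ℕ) μ : ℤ)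
        = ((n : ℤ) - 2) * μ + 1 := by nlinarith [hgE_ub, hgE_lb, hrpos]
    -- now everything is tight
    have hAeq : ∑ k ∈ Finset.univ.erase i0,
          ((r : ℤ) * (level (↑(P k) : Multiset ℕ) μ : ℤ) - r)
        = ((n : ℤ) - 2) * ((μ : ℤ) - 1) * r := by
      rw [hlhs, hgE_eq]; ring
    have hABeq : ∑ k ∈ Finset.univ.erase i0,
          ((r : ℤ) * (level (↑(P k) : Multiset ℕ) μ : ℤ) - r)
        = ∑ k ∈ Finset.univ.erase i0,
          (level (↑(P k) : Multiset ℕ) r : ℤ) * ((μ : ℤ) - 1) := by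
      apply le_antisymm hsumF5
      rw [hAeq, hrhs]
      linarith
    have hterm : ∀ k ∈ Finset.univ.erase i0,
        (r : ℤ) * (level (↑(P k) : Multiset ℕ) μ : ℤ) - r
          = (level (↑(P k) : Multiset ℕ) r : ℤ) * ((μ : ℤ) - 1) :=
      (Finset.sum_eq_sum_iff_of_le (fun k _ => hF5' k)).mp hABeq
    have hEa_eq : ∑ k ∈ Finset.univ.erase i0, (level (↑(P k) : Multiset ℕ) r : ℤ)
        = ((n : ℤ) - 2) * r := by
      have h1 : (∑ k ∈ Finset.univ.erase i0, (level (↑(P k) : Multiset ℕ) r : ℤ)) * ((μ : ℤ) - 1)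
          = ((n : ℤ) - 2) * r * ((μ : ℤ) - 1) := by
        rw [← hrhs, ← hABeq, hAeq]; ring
      exact mul_right_cancel₀ (by linarith : ((μ : ℤ) - 1) ≠ 0) h1
    -- rigidity per k
    have hrig : ∀ k ∈ Finset.univ.erase i0,
        (2 * ∑ μ' ∈ Finset.Icc 1 r, level (↑(P k) : Multiset ℕ) μ'
            = r * (level (↑(P k) : Multiset ℕ) r + 1)) ∧
        ((↑(P k) : Multiset ℕ).card * (level (↑(P k) : Multiset ℕ) μ - 1) = μ - 1) := by
      intro k hk
      apply rigid _ (hQsum k) (hQpos k) hμ2 hμr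
      have h1 := hg1 k
      have h2 : ((r * (level (↑(P k) : Multiset ℕ) μ - 1) : ℕ) : ℤ)
          = ((level (↑(P k) : Multiset ℕ) r * (μ - 1) : ℕ) : ℤ) := by
        push_cast [Nat.cast_sub h1, Nat.cast_sub (show 1 ≤ μ by omega)]
        linarith [hterm k hk]
      exact_mod_cast h2
    -- compute Σ d
    have hdi0 : d i0 = (r : ℤ) ^ 2 - r := by
      rw [hd i0]
      have h1 : ∀ μ' ∈ Finset.Icc 1 r, (level (↑(P i0) : Multiset ℕ) μ' : ℤ) = 1 := by
        intro μ' hμ'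
        simp only [Finset.mem_Icc] at hμ'
        rw [hi0', level_replicate_one hμ'.1 hμ'.2]
        norm_num
      rw [Finset.sum_congr rfl h1, Finset.sum_const, Nat.card_Icc, nsmul_eq_mul]
      have hr1 : ((r + 1 - 1 : ℕ) : ℤ) = (r : ℤ) := by omega
      rw [hr1]
      ring
    have hdE : ∀ k ∈ Finset.univ.erase i0,
        d k = (r : ℤ) ^ 2 - r * (level (↑(P k) : Multiset ℕ) r : ℤ) := by
      intro k hk
      rw [hd k]
      have h2 := (hrig k hk).1
      have h2' : (2 : ℤ) * ∑ μ' ∈ Finset.Icc 1 r, (level (↑(P k) : Multiset ℕ) μ' : ℤ)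
          = (r : ℤ) * ((level (↑(P k) : Multiset ℕ) r : ℤ) + 1) := by exact_mod_cast h2
      linarith
    have hsumd : ∑ i, d i = 2 * (r : ℤ) ^ 2 - r := by
      rw [← Finset.add_sum_erase _ _ (Finset.mem_univ i0), hdi0,
        Finset.sum_congr rfl hdE, Finset.sum_sub_distrib, Finset.sum_const, hcardE,
        ← Finset.mul_sum, hEa_eq, nsmul_eq_mul, hn1]
      ring
    -- α forces r = 2
    have hr2 : r = 2 := by
      rw [hsumd] at hα
      have h1 : (r : ℤ) ≤ 2 := by linarith
      have h2 : r ≤ 2 := by exact_mod_cast h1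
      omega
    have hμ2' : μ = 2 := by omega
    -- then each k ≠ i0 has level (P k) r = r, contradicting hEa_eq
    have haE : ∀ k ∈ Finset.univ.erase i0, (level (↑(P k) : Multiset ℕ) r : ℤ) = r := by
      intro k hk
      have h3 := (hrig k hk).2
      have hgk : level (↑(P k) : Multiset ℕ) μ = 2 := by
        have hne : (↑(P k) : Multiset ℕ).card * (level (↑(P k) : Multiset ℕ) μ - 1) = 1 := by
          rw [h3, hμ2']
        have h5 := Nat.eq_one_of_mul_eq_one_left hne
        have h6 := hg1 k
        omega
      have h4 := hterm k hk
      rw [hgk, hμ2'] at h4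
      push_cast at h4
      linarith
    have hfin : ∑ k ∈ Finset.univ.erase i0, (level (↑(P k) : Multiset ℕ) r : ℤ)
        = ((n : ℤ) - 1) * r := by
      rw [Finset.sum_congr rfl haE, Finset.sum_const, hcardE, nsmul_eq_mul, hn1]
    rw [hEa_eq] at hfin
    have : (r : ℤ) = 0 := by linarith
    rw [hr2] at this
    norm_num at this
  · -- easy direction
    intro hOK
    have hSr : ∑ i, (level (↑(P i) : Multiset ℕ) r : ℤ) ≤ ((n : ℤ) - 2) * r + 1 := by
      have h := hOK r (by simp only [Finset.mem_Icc]; omega)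
      linarith
    constructor
    · -- α
      have hsplit : ∀ i : Fin n, ∑ μ ∈ Finset.Icc 1 r, (level (↑(P i) : Multiset ℕ) μ : ℤ)
          = 1 + ∑ μ ∈ Finset.Icc 2 r, (level (↑(P i) : Multiset ℕ) μ : ℤ) := by
        intro i
        have hins : Finset.Icc 1 r = insert 1 (Finset.Icc 2 r) := by
          ext x; simp only [Finset.mem_Icc, Finset.mem_insert]; omega
        rw [hins, Finset.sum_insert (by simp), hlev1 i]
        norm_num
      have hsum_levels : ∑ i, ∑ μ ∈ Finset.Icc 1 r, (level (↑(P i) : Multiset ℕ) μ : ℤ)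
          = n + ∑ μ ∈ Finset.Icc 2 r, ∑ i, (level (↑(P i) : Multiset ℕ) μ : ℤ) := by
        rw [Finset.sum_congr rfl (fun i _ => hsplit i), Finset.sum_add_distrib,
          Finset.sum_const, Finset.card_univ, Fintype.card_fin, Finset.sum_comm]
        simp
      have hGsum : 2 * ∑ μ ∈ Finset.Icc 2 r, (μ : ℤ) = r * (r + 1) - 2 := by
        have h := gauss_Icc r
        have hins : Finset.Icc 1 r = insert 1 (Finset.Icc 2 r) := by
          ext x; simp only [Finset.mem_Icc, Finset.mem_insert]; omega
        rw [hins, Finset.sum_insert (by simp)] at h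
        push_cast at h ⊢
        linarith
      have hWb : ∑ μ ∈ Finset.Icc 2 r, ∑ i, (level (↑(P i) : Multiset ℕ) μ : ℤ)
          ≤ ((n : ℤ) - 2) * (∑ μ ∈ Finset.Icc 2 r, (μ : ℤ)) + ((r : ℤ) - 1) := by
        calc ∑ μ ∈ Finset.Icc 2 r, ∑ i, (level (↑(P i) : Multiset ℕ) μ : ℤ)
            ≤ ∑ μ ∈ Finset.Icc 2 r, (((n : ℤ) - 2) * μ + 1) :=
            Finset.sum_le_sum (fun μ hμ => by linarith [hOK μ hμ])
        _ = ((n : ℤ) - 2) * (∑ μ ∈ Finset.Icc 2 r, (μ : ℤ)) + ((r : ℤ) - 1) := by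
            rw [Finset.sum_add_distrib, Finset.sum_const, ← Finset.mul_sum, Nat.card_Icc,
              nsmul_eq_mul]
            have hr1 : ((r + 1 - 2 : ℕ) : ℤ) = (r : ℤ) - 1 := by omega
            rw [hr1]
            ring
      have hkey : 2 * ((n : ℤ) - 2) * (∑ μ ∈ Finset.Icc 2 r, (μ : ℤ))
          = ((n : ℤ) - 2) * ((r : ℤ) * (r + 1) - 2) := by
        rw [mul_assoc, ← hGsum]
        ring
      have hdsum : ∑ i, d i = n * ((r : ℤ) * (r + 1))
          - 2 * (n + ∑ μ ∈ Finset.Icc 2 r, ∑ i, (level (↑(P i) : Multiset ℕ) μ : ℤ)) := by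
        rw [Finset.sum_congr rfl (fun i _ => hd i), Finset.sum_sub_distrib,
          Finset.sum_const, Finset.card_univ, Fintype.card_fin, ← Finset.mul_sum, hsum_levels]
        push_cast
        ring
      rw [hdsum]
      have hn' : (3 : ℤ) ≤ n := by exact_mod_cast hn
      have hr' : (2 : ℤ) ≤ r := by exact_mod_cast hr
      linarith [hWb, hkey]
    · -- β
      intro i
      have hsum_erase : ∑ k ∈ Finset.univ.erase i, R k = (∑ k, R k) - R i := by
        rw [← Finset.add_sum_erase _ _ (Finset.mem_univ i)]
        ring
      have hRtot : ∑ k, R k = n * r - ∑ k, (level (↑(P k) : Multiset ℕ) r : ℤ) := by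
        rw [Finset.sum_congr rfl (fun k _ => hR k), Finset.sum_sub_distrib, Finset.sum_const,
          Finset.card_univ, Fintype.card_fin, nsmul_eq_mul]
      have hRi : R i ≤ (r : ℤ) - 1 := by
        rw [hR i]
        have h1 := ha1 i
        have h2 : (1 : ℤ) ≤ (level (↑(P i) : Multiset ℕ) r : ℤ) := by exact_mod_cast h1
        linarith
      rw [hsum_erase, hRtot]
      have hn' : (3 : ℤ) ≤ n := by exact_mod_cast hn
      have hr' : (2 : ℤ) ≤ r := by exact_mod_cast hr
      linarith [hSr, hRi]
end
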